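/- Certification of OR_n in the free-literal depth-2 size-2 AC0 base class: Let n ≥ 2 and let H be the set of Boolean functions on {0,1}^n computable by a circuit with at most two gates and depth at most two, where each gate is an unbounded fan-in AND or OR whose inputs are literals (a variable x_i or its negation ¬x_i) and possibly the output of the other gate, with empty AND equal to constant 1 and empty OR equal to constant 0. Then cert(OR_n, H) = n + 1, and the labeled set S = {0^n, e₁, …, e_n} is an input-output certificate for OR_n in H. -/
import Mathlib


/-- Evaluate a literal: `(i, true)` is the variable `x_i`, `(i, false)` its negation. -/
def litEval {n : ℕ} (x : Fin n → Bool) (l : Fin n × Bool) : Bool :=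
  if l.2 then x l.1 else !x l.1

/-- Evaluate an unbounded fan-in gate (`isAnd = true` for AND, `false` for OR) on a
finite set of literals `L` together with a list `extra` of additional Boolean inputs
(outputs of other gates). The empty AND is the constant `1`, the empty OR is `0`. -/
def gateEval {n : ℕ} (isAnd : Bool) (L : Finset (Fin n × Bool)) (extra : List Bool)
    (x : Fin n → Bool) : Bool :=
  if isAnd then decide ((∀ l ∈ L, litEval x l = true) ∧ ∀ b ∈ extra, b = true)
  else decide ((∃ l ∈ L, litEval x l = true) ∨ ∃ b ∈ extra, b = true)

/-- The free-literal depth-2 size-2 AC⁰ base class: Boolean functions computed by an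
output gate over literals which may additionally read the output of one bottom gate
over literals. -/
def HAC0 (n : ℕ) : Set ((Fin n → Bool) → Bool) :=
  {h | ∃ (t₁ t₂ : Bool) (L₁ L₂ : Finset (Fin n × Bool)) (useBottom : Bool),
    ∀ x, h x = gateEval t₁ L₁
      (if useBottom then [gateEval t₂ L₂ [] x] else []) x}

/-- `OR_n(x) = 1` iff `x₁ + ⋯ + x_n ≥ 1`. -/
def ORn (n : ℕ) : (Fin n → Bool) → Bool :=
  fun x => decide (1 ≤ ∑ i, (if x i then (1 : ℤ) else 0))

/-- `S` is an input-output certificate for `f` in `H`. -/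
def IsCert {X : Type*} (H : Set (X → Bool)) (f : X → Bool) (S : Finset X) : Prop :=
  ∀ h ∈ H, (∀ x ∈ S, h x = f x) → ∀ x, h x = f x

/-- The certificate size: the minimum cardinality of an input-output certificate. -/
noncomputable def cert {X : Type*} (H : Set (X → Bool)) (f : X → Bool) : ℕ :=
  sInf {k : ℕ | ∃ S : Finset X, S.card = k ∧ IsCert H f S}

/-- The set `{0ⁿ, e₁, …, e_n}`: the all-zeros vector and the `n` one-hot vectors. -/
def zeroAndOneHots (n : ℕ) : Finset (Fin n → Bool) :=
  insert (fun _ => false) ((Finset.univ : Finset (Fin n)).image fun i j => decide (j = i))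

-- aux
def eV {n : ℕ} (i : Fin n) : Fin n → Bool := fun j => decide (j = i)

lemma ORn_true_iff {n : ℕ} (x : Fin n → Bool) : ORn n x = true ↔ ∃ i, x i = true := by
  simp only [ORn, decide_eq_true_iff]
  constructor
  · intro h
    by_contra hc
    push_neg at hc
    simp only [Bool.not_eq_true] at hc
    simp [hc] at h
  · rintro ⟨i, hi⟩
    calc (1:ℤ) = if x i then 1 else 0 := by simp [hi]
    _ ≤ _ := Finset.single_le_sum (f := fun i => if x i then (1:ℤ) else 0)
        (by intro j _; positivity) (Finset.mem_univ i)

lemma ORn_zero {n : ℕ} : ORn n (fun _ => false) = false := by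
  simp [ORn]

lemma ORn_eV {n : ℕ} (i : Fin n) : ORn n (eV i) = true := by
  rw [ORn_true_iff]; exact ⟨i, by simp [eV]⟩

lemma gate_and_iff {n : ℕ} (L : Finset (Fin n × Bool)) (extra : List Bool) (x : Fin n → Bool) :
    gateEval true L extra x = true ↔ (∀ l ∈ L, litEval x l = true) ∧ ∀ b ∈ extra, b = true := by
  simp [gateEval]

lemma gate_or_iff {n : ℕ} (L : Finset (Fin n × Bool)) (extra : List Bool) (x : Fin n → Bool) :
    gateEval false L extra x = true ↔ (∃ l ∈ L, litEval x l = true) ∨ ∃ b ∈ extra, b = true := by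
  simp [gateEval]

lemma lit_zero {n : ℕ} (l : Fin n × Bool) :
    litEval (fun _ => false) l = !l.2 := by
  rcases l with ⟨k, b⟩; cases b <;> simp [litEval]

lemma lit_eV {n : ℕ} (i : Fin n) (l : Fin n × Bool) :
    litEval (eV i) l = (if l.2 then decide (l.1 = i) else !decide (l.1 = i)) := by
  rcases l with ⟨k, b⟩; cases b <;> simp [litEval, eV]

lemma and_true_iff' {n : ℕ} (L : Finset (Fin n × Bool)) (x : Fin n → Bool) :
    gateEval true L [] x = true ↔ ∀ l ∈ L, litEval x l = true := by simp [gateEval]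
lemma and_false_iff' {n : ℕ} (L : Finset (Fin n × Bool)) (x : Fin n → Bool) :
    gateEval true L [] x = false ↔ ∃ l ∈ L, litEval x l = false := by
  rw [Bool.eq_false_iff, Ne, and_true_iff']
  push_neg
  simp [Bool.not_eq_true]
lemma or_true_iff' {n : ℕ} (L : Finset (Fin n × Bool)) (x : Fin n → Bool) :
    gateEval false L [] x = true ↔ ∃ l ∈ L, litEval x l = true := by simp [gateEval]
lemma or_false_iff' {n : ℕ} (L : Finset (Fin n × Bool)) (x : Fin n → Bool) :
    gateEval false L [] x = false ↔ ∀ l ∈ L, litEval x l = false := by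
  simp [gateEval]
lemma and_extra {n : ℕ} (L : Finset (Fin n × Bool)) (b : Bool) (x : Fin n → Bool) :
    gateEval true L [b] x = (gateEval true L [] x && b) := by
  cases b <;> simp [gateEval]
lemma or_extra {n : ℕ} (L : Finset (Fin n × Bool)) (b : Bool) (x : Fin n → Bool) :
    gateEval false L [b] x = (gateEval false L [] x || b) := by
  cases b <;> simp [gateEval]

lemma exists_ne' {n : ℕ} (hn : 2 ≤ n) (k : Fin n) : ∃ m : Fin n, m ≠ k := by
  haveI : Nontrivial (Fin n) := Fin.nontrivial_iff_two_le.mpr hn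
  exact exists_ne k

lemma and_all_eV {n : ℕ} (hn : 2 ≤ n) (L : Finset (Fin n × Bool))
    (h : ∀ i, gateEval true L [] (eV i) = true) : L = ∅ := by
  rcases Finset.eq_empty_or_nonempty L with h' | ⟨⟨k, b⟩, hl⟩
  · exact h'
  · exfalso
    cases b
    · have := (and_true_iff' _ _).mp (h k) _ hl
      simp [lit_eV] at this
    · obtain ⟨m, hm⟩ := exists_ne' hn k
      have := (and_true_iff' _ _).mp (h m) _ hl
      simp [lit_eV] at this
      exact hm this.symm

-- single OR gate case: false on 0, true on all eV ⇒ true on every x with some coordinate true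
lemma or_single_key {n : ℕ} (L : Finset (Fin n × Bool))
    (h0 : gateEval false L [] (fun _ => false) = false)
    (x : Fin n → Bool) (i : Fin n) (hxi : x i = true)
    (hi : gateEval false L [] (eV i) = true) :
    gateEval false L [] x = true := by
  have hpos : ∀ l ∈ L, l.2 = true := by
    intro l hl
    have := (or_false_iff' _ _).mp h0 l hl
    rw [lit_zero] at this
    simpa using this
  obtain ⟨l, hl, hlv⟩ := (or_true_iff' _ _).mp hi
  have hb := hpos l hl
  rw [lit_eV] at hlv
  rw [hb] at hlv
  simp at hlv
  refine (or_true_iff' _ _).mpr ⟨l, hl, ?_⟩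
  rcases l with ⟨k, b⟩
  simp at hb hlv
  subst hb; subst hlv
  simpa [litEval] using hxi

lemma key {n : ℕ} (hn : 2 ≤ n) (t₁ t₂ : Bool) (L₁ L₂ : Finset (Fin n × Bool)) (ub : Bool)
    (h : (Fin n → Bool) → Bool)
    (hh : ∀ x, h x = gateEval t₁ L₁ (if ub then [gateEval t₂ L₂ [] x] else []) x)
    (h0 : h (fun _ => false) = false) (hi : ∀ i, h (eV i) = true) :
    ∀ x i, x i = true → h x = true := by
  intro x i hxi
  cases ub
  case false =>
    -- single gate of type t₁
    simp only [if_neg (by simp : ¬ (false = true))] at hh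
    cases t₁
    case false =>
      rw [hh]
      exact or_single_key L₁ (hh _ ▸ h0) x i hxi (hh _ ▸ hi i)
    case true =>
      have hL : L₁ = ∅ := and_all_eV hn _ (fun j => hh _ ▸ hi j)
      subst hL
      rw [hh] at h0; simp [gateEval] at h0
  case true =>
    simp only [reduceIte] at hh
    cases t₁
    case true =>
      -- output AND: rewrite via and_extra
      have hh' : ∀ y, h y = (gateEval true L₁ [] y && gateEval t₂ L₂ [] y) := by
        intro y; rw [hh, and_extra]
      have hL : L₁ = ∅ := by
        apply and_all_eV hn
        intro j
        have := hi j; rw [hh'] at this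
        exact (Bool.and_eq_true _ _).mp this |>.1
      subst hL
      have hg0 : gateEval t₂ L₂ [] (fun _ => false) = false := by
        have := h0; rw [hh'] at this
        simpa [gateEval] using this
      have hgi : ∀ j, gateEval t₂ L₂ [] (eV j) = true := by
        intro j; have := hi j; rw [hh'] at this
        exact (Bool.and_eq_true _ _).mp this |>.2
      rw [hh']
      cases t₂
      case false =>
        simp only [Bool.and_eq_true]
        exact ⟨by simp [gateEval], or_single_key L₂ hg0 x i hxi (hgi i)⟩
      case true =>
        have hL₂ : L₂ = ∅ := and_all_eV hn _ hgi
        subst hL₂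
        simp [gateEval] at hg0
    case false =>
      -- output OR gate
      have hh' : ∀ y, h y = (gateEval false L₁ [] y || gateEval t₂ L₂ [] y) := by
        intro y; rw [hh, or_extra]
      have h0' : gateEval false L₁ [] (fun _ => false) = false ∧
          gateEval t₂ L₂ [] (fun _ => false) = false := by
        have := h0; rw [hh'] at this
        exact Bool.or_eq_false_iff.mp this
      have hpos : ∀ l ∈ L₁, l.2 = true := by
        intro l hl
        have := (or_false_iff' _ _).mp h0'.1 l hl
        rw [lit_zero] at this; simpa using this
      rw [hh', Bool.or_eq_true]
      by_cases hmem : (i, true) ∈ L₁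
      · left
        exact (or_true_iff' _ _).mpr ⟨(i, true), hmem, by simpa [litEval] using hxi⟩
      · -- from hi i : top literals can't fire at eV i, so bottom gate true at eV i
        have hgi2 : gateEval t₂ L₂ [] (eV i) = true := by
          have := hi i; rw [hh', Bool.or_eq_true] at this
          rcases this with htop | hbot
          · exfalso
            obtain ⟨l, hl, hlv⟩ := (or_true_iff' _ _).mp htop
            have hb := hpos l hl
            rw [lit_eV, hb] at hlv
            simp at hlv
            rcases l with ⟨k, b⟩
            simp at hb hlv
            subst hb; subst hlv
            exact hmem hl
          · exact hbot
        cases t₂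
        · right
          exact or_single_key L₂ h0'.2 x i hxi hgi2
        ·
          -- bottom AND gate, true at eV i, false at 0 so contains (i,true)
          have hall := (and_true_iff' _ _).mp hgi2
          have hmem₂ : (i, true) ∈ L₂ := by
            obtain ⟨l, hl, hlf⟩ := (and_false_iff' _ _).mp h0'.2
            rw [lit_zero] at hlf
            have hb : l.2 = true := by simpa using hlf
            have := hall l hl
            rw [lit_eV, hb] at this
            simp at this
            rcases l with ⟨k, b⟩
            simp at hb this
            subst hb; subst this
            exact hl
          by_cases hgx : gateEval true L₂ [] x = true
          · exact Or.inr hgx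
          · -- some literal of L₂ false at x; must be a negative literal (k,false), k ≠ i, x k = true
            rw [Bool.not_eq_true, and_false_iff'] at hgx
            obtain ⟨⟨k, b⟩, hl, hlf⟩ := hgx
            have hbt := hall _ hl
            rw [lit_eV] at hbt
            cases b
            · simp at hbt hlf
              -- hbt : k ≠ i, hlf : x k = true
              simp [litEval] at hlf
              -- now use hi k: bottom gate false at eV k (since (i,true)∈L₂, i ≠ k)
              have hgk : gateEval true L₂ [] (eV k) = false := by
                rw [and_false_iff']
                exact ⟨(i, true), hmem₂, by simp [lit_eV, Ne.symm hbt]⟩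
              have := hi k; rw [hh', Bool.or_eq_true] at this
              rcases this with htop | hbot
              · left
                obtain ⟨⟨m, b'⟩, hl', hlv⟩ := (or_true_iff' _ _).mp htop
                have hb : b' = true := hpos _ hl'
                subst hb
                rw [lit_eV] at hlv
                simp at hlv
                refine (or_true_iff' _ _).mpr ⟨(m, true), hl', ?_⟩
                have hx : litEval x (m, true) = x m := by simp [litEval]
                rw [hx, hlv]; exact hlf
              · rw [hgk] at hbot; exact absurd hbot (by simp)
            · -- b = true: k = i, but x i = true so literal true, contradiction
              simp at hbt
              subst hbt
              simp [litEval, hxi] at hlf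

lemma not_or_eq_zero {n : ℕ} (x : Fin n → Bool) (hx : ¬ ∃ i, x i = true) :
    x = fun _ => false := by
  funext j
  simp only [not_exists, Bool.not_eq_true] at hx
  exact hx j

lemma zero_mem {n : ℕ} : (fun _ => false) ∈ zeroAndOneHots n :=
  Finset.mem_insert_self _ _

lemma eV_mem {n : ℕ} (i : Fin n) : eV i ∈ zeroAndOneHots n := by
  refine Finset.mem_insert_of_mem (Finset.mem_image.mpr ⟨i, Finset.mem_univ _, rfl⟩)

lemma eV_injective {n : ℕ} : Function.Injective (eV (n := n)) := by
  intro i j hij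
  have := congrFun hij i
  simpa [eV] using this.symm

lemma card_zeroAndOneHots {n : ℕ} (hn : 1 ≤ n) : (zeroAndOneHots n).card = n + 1 := by
  have he : (fun (i : Fin n) (j : Fin n) => decide (j = i)) = eV := rfl
  rw [zeroAndOneHots, he, Finset.card_insert_of_notMem, Finset.card_image_of_injective _ eV_injective]
  · simp
  · intro hmem
    obtain ⟨i, _, hi⟩ := Finset.mem_image.mp hmem
    have := congrFun hi i
    simp [eV] at this

lemma cert_main {n : ℕ} (hn : 2 ≤ n) : IsCert (HAC0 n) (ORn n) (zeroAndOneHots n) := by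
  rintro h ⟨t₁, t₂, L₁, L₂, ub, hh⟩ hagr x
  have h0 : h (fun _ => false) = false := by
    rw [hagr _ zero_mem, ORn_zero]
  have hi : ∀ j, h (eV j) = true := fun j => by rw [hagr _ (eV_mem j), ORn_eV]
  by_cases hx : ∃ i, x i = true
  · obtain ⟨i, hxi⟩ := hx
    rw [key hn t₁ t₂ L₁ L₂ ub h hh h0 hi x i hxi, (ORn_true_iff x).mpr ⟨i, hxi⟩]
  · rw [not_or_eq_zero x hx, h0, ORn_zero]

-- the "all but i" OR circuit
def Li {n : ℕ} (i : Fin n) : Finset (Fin n × Bool) :=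
  (Finset.univ.filter (· ≠ i)).image (fun j => (j, true))

lemma lower {n : ℕ} (hn : 2 ≤ n) (S : Finset (Fin n → Bool))
    (hS : IsCert (HAC0 n) (ORn n) S) : n + 1 ≤ S.card := by
  have hsub : zeroAndOneHots n ⊆ S := by
    intro y hy
    rw [zeroAndOneHots, Finset.mem_insert] at hy
    rcases hy with rfl | hy
    · -- zero must be in S, else const-true circuit agrees on S
      by_contra hz
      have hmem : (fun _ : Fin n → Bool => true) ∈ HAC0 n :=
        ⟨true, true, ∅, ∅, false, fun x => by simp [gateEval]⟩
      have := hS _ hmem (fun x hxS => by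
        have hne : x ≠ (fun _ => false) := fun hc => hz (hc ▸ hxS)
        have : ∃ i, x i = true := by
          by_contra hc
          exact hne (not_or_eq_zero x hc)
        rw [(ORn_true_iff x).mpr this]) (fun _ => false)
      rw [ORn_zero] at this
      simp at this
    · obtain ⟨i, _, rfl⟩ := Finset.mem_image.mp hy
      show eV i ∈ S
      by_contra hz
      have hmem : (fun x => gateEval false (Li i) [] x) ∈ HAC0 n :=
        ⟨false, true, Li i, ∅, false, fun x => by simp⟩
      have hLi : ∀ l ∈ Li i, l.2 = true ∧ l.1 ≠ i := by
        intro l hl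
        obtain ⟨j, hj, rfl⟩ := Finset.mem_image.mp hl
        simp only [Finset.mem_filter] at hj
        exact ⟨rfl, hj.2⟩
      have hagr : ∀ x ∈ S, gateEval false (Li i) [] x = ORn n x := by
        intro x hxS
        have hne : x ≠ eV i := fun hc => hz (hc ▸ hxS)
        by_cases hx : ∃ j, x j = true
        · -- some coordinate true; exists one ≠ i
          obtain ⟨j, hj, hji⟩ : ∃ j, x j = true ∧ j ≠ i := by
            by_contra hc
            push_neg at hc
            apply hne
            funext m
            by_cases hm : m = i
            · subst hm
              obtain ⟨j, hj⟩ := hx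
              have := hc j hj
              subst this
              simp [eV, hj]
            · have : x m ≠ true := fun ht => hm (hc m ht)
              simp only [Bool.not_eq_true] at this
              simp [eV, this, hm]
          rw [(ORn_true_iff x).mpr ⟨j, hj⟩]
          refine (or_true_iff' _ _).mpr ⟨(j, true), ?_, by simpa [litEval] using hj⟩
          exact Finset.mem_image.mpr ⟨j, Finset.mem_filter.mpr ⟨Finset.mem_univ _, hji⟩, rfl⟩
        · rw [not_or_eq_zero x hx, ORn_zero]
          refine (or_false_iff' _ _).mpr ?_
          intro l hl
          have := (hLi l hl).1
          rcases l with ⟨k, b⟩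
          simp at this; subst this
          simp [litEval]
      have := hS _ hmem hagr (eV i)
      rw [ORn_eV] at this
      have hfalse : gateEval false (Li i) [] (eV i) = false := by
        refine (or_false_iff' _ _).mpr ?_
        intro l hl
        obtain ⟨hb, hni⟩ := hLi l hl
        rcases l with ⟨k, b⟩
        simp at hb; subst hb
        simp only [litEval, if_pos rfl]
        simp only at hni
        simp [eV, hni]
      rw [hfalse] at this
      simp at this
  calc n + 1 = (zeroAndOneHots n).card := (card_zeroAndOneHots (by omega)).symm
  _ ≤ S.card := Finset.card_le_card hsub


/-- **Certification of `OR_n` in the free-literal depth-2 size-2 AC⁰ base class.**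
For `n ≥ 2`, `cert(OR_n, H) = n + 1`, and `{0ⁿ, e₁, …, e_n}` is a certificate for
`OR_n` in `H`. -/
theorem stmt9 {n : ℕ} (hn : 2 ≤ n) :
    cert (HAC0 n) (ORn n) = n + 1 ∧ IsCert (HAC0 n) (ORn n) (zeroAndOneHots n) := by
  refine ⟨?_, cert_main hn⟩
  have hmem : n + 1 ∈ {k : ℕ | ∃ S : Finset (Fin n → Bool), S.card = k ∧ IsCert (HAC0 n) (ORn n) S} :=
    ⟨zeroAndOneHots n, card_zeroAndOneHots (by omega), cert_main hn⟩
  refine le_antisymm (Nat.sInf_le hmem) (le_csInf ⟨_, hmem⟩ ?_)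
  rintro k ⟨S, rfl, hS⟩
  exact lower hn S hS
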